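/- Let n ≥ 3 and let x_1, …, x_n be real numbers satisfying x_1 > -x_2 > x_3 > … > (-1)^{n+1} x_n > 0. Then for every k with 3 ≤ k ≤ n, the third elementary symmetric polynomial of x_1, …, x_k is strictly negative: s_3^{(k)} = Σ_{1 ≤ i_1 < i_2 < i_3 ≤ k} x_{i_1} x_{i_2} x_{i_3} < 0. -/
import Mathlib


open Finset

private def Esym (x : ℕ → ℝ) (r m : ℕ) : ℝ :=
  ∑ t ∈ (Icc 1 m).powersetCard r, ∏ i ∈ t, x i

private lemma Esym_rec (x : ℕ → ℝ) (r k : ℕ) :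
    Esym x (r+1) (k+1) = Esym x (r+1) k + x (k+1) * Esym x r k := by
  unfold Esym
  have hnot : (k+1) ∉ Icc 1 k := by simp
  rw [← Finset.insert_Icc_right_eq_Icc_add_one (by omega : 1 ≤ k + 1),
    powersetCard_succ_insert hnot, sum_union, sum_image]
  · rw [Finset.mul_sum]
    congr 1
    refine Finset.sum_congr rfl fun t ht => ?_
    rw [Finset.prod_insert]
    intro h
    exact hnot (Finset.mem_powersetCard.mp ht |>.1 h)
  · intro t1 h1 t2 h2 h
    have n1 : (k+1) ∉ t1 := fun h' => hnot (Finset.mem_powersetCard.mp h1 |>.1 h')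
    have n2 : (k+1) ∉ t2 := fun h' => hnot (Finset.mem_powersetCard.mp h2 |>.1 h')
    have := congrArg (Finset.erase · (k+1)) h
    simpa [Finset.erase_insert, n1, n2] using this
  · rw [Finset.disjoint_left]
    intro t ht ht'
    obtain ⟨u, hu, rfl⟩ := Finset.mem_image.mp ht'
    exact hnot (Finset.mem_powersetCard.mp ht |>.1 (Finset.mem_insert_self _ _))

private lemma Esym_zero (x : ℕ → ℝ) (m : ℕ) : Esym x 0 m = 1 := by
  simp [Esym]

private lemma Esym_nil (x : ℕ → ℝ) (r : ℕ) : Esym x (r+1) 0 = 0 := by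
  unfold Esym
  rw [Finset.powersetCard_eq_empty.mpr (by simp), Finset.sum_empty]

private lemma key (n : ℕ) (x : ℕ → ℝ)
    (hpos : ∀ i, 1 ≤ i → i ≤ n → 0 < (-1 : ℝ) ^ (i + 1) * x i)
    (hdec : ∀ i, 1 ≤ i → i + 1 ≤ n →
      (-1 : ℝ) ^ (i + 2) * x (i + 1) < (-1 : ℝ) ^ (i + 1) * x i) :
    ∀ k, 3 ≤ k → k ≤ n →
      0 < Esym x 1 k ∧
      (Odd k → (-1 : ℝ) ^ (k+1) * x k ≤ Esym x 1 k) ∧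
      Esym x 2 k < 0 ∧
      (Even k → (-1 : ℝ) ^ (k+1) * x k * Esym x 1 k ≤ -Esym x 2 k) ∧
      Esym x 3 k < 0 ∧
      (Odd k → (-1 : ℝ) ^ (k+1) * x k * (-Esym x 2 k) ≤ -Esym x 3 k) := by
  intro k hk
  induction k, hk using Nat.le_induction with
  | base =>
    intro h3n
    have hx1 : 0 < x 1 := by have := hpos 1 (by omega) (by omega); norm_num at this; linarith
    have hx2 : x 2 < 0 := by have := hpos 2 (by omega) (by omega); norm_num at this; linarith
    have hx3 : 0 < x 3 := by have := hpos 3 (by omega) (by omega); norm_num at this; linarith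
    have hd1 : -x 2 < x 1 := by have := hdec 1 (by omega) (by omega); norm_num at this; linarith
    have hd2 : x 3 < -x 2 := by have := hdec 2 (by omega) (by omega); norm_num at this; linarith
    have E11 : Esym x 1 1 = x 1 := by
      rw [show (1:ℕ) = 0+1 from rfl, Esym_rec, Esym_nil, Esym_zero]; ring
    have E12 : Esym x 1 2 = x 1 + x 2 := by
      rw [show (2:ℕ) = 1+1 from rfl, Esym_rec, E11, Esym_zero]; ring
    have E13 : Esym x 1 3 = x 1 + x 2 + x 3 := by
      rw [show (3:ℕ) = 2+1 from rfl, Esym_rec, E12, Esym_zero]; ring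
    have E21 : Esym x 2 1 = 0 := by
      rw [show (1:ℕ) = 0+1 from rfl, Esym_rec, Esym_nil, Esym_nil]; ring
    have E22 : Esym x 2 2 = x 2 * x 1 := by
      rw [show (2:ℕ) = 1+1 from rfl, Esym_rec, E21, E11]; ring
    have E23 : Esym x 2 3 = x 2 * x 1 + x 3 * (x 1 + x 2) := by
      rw [show (3:ℕ) = 2+1 from rfl, Esym_rec, E22, E12]
    have E32 : Esym x 3 2 = 0 := by
      rw [show (2:ℕ) = 1+1 from rfl, Esym_rec, E21,
        show (1:ℕ) = 0+1 from rfl, Esym_rec, Esym_nil, Esym_nil]; ring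
    have E33 : Esym x 3 3 = x 3 * (x 2 * x 1) := by
      rw [show (3:ℕ) = 2+1 from rfl, Esym_rec, E32, E22]; ring
    refine ⟨?_, fun _ => ?_, ?_, fun h => absurd h (by decide), ?_, fun _ => ?_⟩
    · rw [E13]; linarith
    · rw [E13]; norm_num; linarith
    · rw [E23]
      nlinarith [mul_lt_mul_of_pos_right hd2 (show (0:ℝ) < x 1 + x 2 by linarith),
        sq_nonneg (x 2)]
    · rw [E33]
      nlinarith [mul_pos hx3 hx1, hx2]
    · rw [E23, E33]
      norm_num
      nlinarith [mul_nonneg (mul_nonneg hx3.le hx3.le)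
        (show (0:ℝ) ≤ x 1 + x 2 by linarith)]
  | succ k hk3 ih =>
    intro hk1n
    obtain ⟨i1, i2, i3, i4, i5, i6⟩ := ih (by omega)
    have hd := hdec k (by omega) hk1n
    have hp := hpos (k+1) (by omega) hk1n
    have r1 : Esym x 1 (k+1) = Esym x 1 k + x (k+1) := by
      rw [Esym_rec, Esym_zero]; ring
    have r2 : Esym x 2 (k+1) = Esym x 2 k + x (k+1) * Esym x 1 k := Esym_rec x 1 k
    have r3 : Esym x 3 (k+1) = Esym x 3 k + x (k+1) * Esym x 2 k := Esym_rec x 2 k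
    have hpk2 : ((-1:ℝ))^(k+2) = (-1:ℝ)^k := by
      rw [pow_add]; norm_num
    rcases Nat.even_or_odd k with hke | hko
    · -- k even, k+1 odd
      have s1 : ((-1:ℝ))^(k+1) = -1 := (hke.add_one).neg_one_pow
      have s2 : ((-1:ℝ))^(k+1+1) = 1 := by rw [hpk2]; exact hke.neg_one_pow
      rw [s1] at i2 i4 i6
      rw [s2]
      have hp' : 0 < x (k+1) := by
        rw [show k+1+1 = k+2 from rfl, hpk2, hke.neg_one_pow] at hp; linarith
      have hd' : x (k+1) < -x k := by
        rw [hpk2, hke.neg_one_pow, s1] at hd; linarith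
      have hi4 := i4 hke
      have hne : ¬ Even (k+1) := by simp [Nat.even_add_one, hke]
      refine ⟨by linarith, fun _ => by linarith, ?_, fun h => absurd h hne, ?_, fun _ => ?_⟩
      · rw [r2]
        nlinarith [mul_lt_mul_of_pos_right hd' i1]
      · rw [r3]
        nlinarith [mul_pos hp' (neg_pos.mpr i3)]
      · rw [r2, r3]
        nlinarith [i5, mul_pos (mul_pos hp' hp') i1]
    · -- k odd, k+1 even
      have s1 : ((-1:ℝ))^(k+1) = 1 := (hko.add_one).neg_one_pow
      have s2 : ((-1:ℝ))^(k+1+1) = -1 := by rw [hpk2]; exact hko.neg_one_pow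
      rw [s1] at i2 i4 i6
      rw [s2]
      have hp' : x (k+1) < 0 := by
        rw [show k+1+1 = k+2 from rfl, hpk2, hko.neg_one_pow] at hp; linarith
      have hd' : -x (k+1) < x k := by
        rw [hpk2, hko.neg_one_pow, s1] at hd; linarith
      have hi2 := i2 hko
      have hi6 := i6 hko
      have hno : ¬ Odd (k+1) := by simp [Nat.odd_add_one, hko]
      refine ⟨by linarith, fun h => absurd h hno, ?_, fun _ => ?_, ?_, fun h => absurd h hno⟩
      · rw [r2]
        nlinarith [mul_pos (neg_pos.mpr hp') i1]
      · rw [r1, r2]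
        nlinarith [sq_nonneg (x (k+1)), i3]
      · rw [r3]
        nlinarith [hi6, mul_lt_mul_of_pos_right hd' (neg_pos.mpr i3)]

/-- **Case `r = 3` of the induction in Appendix C of the paper.** If `n ≥ 3` and
`x₁ > -x₂ > x₃ > ⋯ > (-1)^{n+1} xₙ > 0`, then for every `3 ≤ k ≤ n` the third
elementary symmetric polynomial of `x₁, …, x_k` is strictly negative:
`s₃^{(k)} = Σ_{1 ≤ i₁ < i₂ < i₃ ≤ k} x_{i₁} x_{i₂} x_{i₃} < 0`. -/
theorem esymm_three_neg_of_alternating (n : ℕ) (hn : 3 ≤ n) (x : ℕ → ℝ)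
    (hpos : ∀ i, 1 ≤ i → i ≤ n → 0 < (-1 : ℝ) ^ (i + 1) * x i)
    (hdec : ∀ i, 1 ≤ i → i + 1 ≤ n →
      (-1 : ℝ) ^ (i + 2) * x (i + 1) < (-1 : ℝ) ^ (i + 1) * x i)
    (k : ℕ) (hk3 : 3 ≤ k) (hkn : k ≤ n) :
    ∑ t ∈ (Icc 1 k).powersetCard 3, ∏ i ∈ t, x i < 0 := by
  exact (key n x hpos hdec k hk3 hkn).2.2.2.2.1
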